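/- arXiv:1207.6301 — 2 statements merged into one kernel-verified Lean document; each statement's English description precedes it below -/
import Mathlib

section
/- Let G be a finite symmetry group for the substitution tiling system (𝒫, ω) which acts freely on 𝒫, and fix n ∈ ℕ. If T ∈ Ω_punc, x₁, x₂ ∈ ℝ^d and g₁, g₂ ∈ G satisfy (T, T + x₁) ∈ R_n, (T, T + x₂) ∈ R_n and g₁⁻¹(T + x₁) = g₂⁻¹(T + x₂), then g₁ = g₂ and x₁ = x₂. (Thus each semidirect product R_n ⋊ G, and hence R_AF ⋊ G = ∪_n (R_n ⋊ G), is a principal groupoid.) -/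
open Metric Set Pointwise

noncomputable section

/-- Points of `ℝ^d`. -/
abbrev Pt (d : ℕ) := EuclideanSpace ℝ (Fin d)

/-- A (possibly labelled) tile in `ℝ^d`: a subset of `ℝ^d` together with a label. -/
structure Tile (d : ℕ) where
  carrier : Set (Pt d)
  label : ℕ

instance {d : ℕ} : Inhabited (Tile d) := ⟨⟨∅, 0⟩⟩

/-- Translate of a tile by a vector. -/
def Tile.translate {d : ℕ} (t : Tile d) (x : Pt d) : Tile d :=
  ⟨(fun y => y + x) '' t.carrier, t.label⟩

/-- A tile proper: homeomorphic to the closed unit ball. -/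
def Tile.IsTile {d : ℕ} (t : Tile d) : Prop :=
  Nonempty (t.carrier ≃ₜ (Metric.closedBall (0 : Pt d) 1))

/-- Support of a partial tiling: the union of its tiles. -/
def psupp {d : ℕ} (P : Set (Tile d)) : Set (Pt d) := ⋃ t ∈ P, t.carrier

/-- `tilesAt P U` = the tiles of `P` meeting `U`, written `P(U)` in the paper. -/
def tilesAt {d : ℕ} (P : Set (Tile d)) (U : Set (Pt d)) : Set (Tile d) :=
  {t ∈ P | (t.carrier ∩ U).Nonempty}

/-- Translate of a collection of tiles. -/
def translateSet {d : ℕ} (P : Set (Tile d)) (x : Pt d) : Set (Tile d) :=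
  (fun t => t.translate x) '' P

/-- A partial tiling: tiles with pairwise disjoint interiors. -/
def IsPartialTiling {d : ℕ} (P : Set (Tile d)) : Prop :=
  (∀ t ∈ P, t.IsTile) ∧
  ∀ t ∈ P, ∀ t' ∈ P, t ≠ t' → interior t.carrier ∩ interior t'.carrier = ∅

/-- A patch: a finite partial tiling. -/
def IsPatch {d : ℕ} (P : Set (Tile d)) : Prop := IsPartialTiling P ∧ P.Finite

/-- A tiling of all of `ℝ^d`. -/
def IsTilingOfSpace {d : ℕ} (P : Set (Tile d)) : Prop :=
  IsPartialTiling P ∧ psupp P = univ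

/-- A substitution tiling system `(𝒫, ω)` with inflation constant `λ > 1`. -/
structure SubstSystem (d : ℕ) where
  proto : Set (Tile d)
  proto_finite : proto.Finite
  proto_nonempty : proto.Nonempty
  proto_isTile : ∀ p ∈ proto, p.IsTile
  proto_zero_mem : ∀ p ∈ proto, (0 : Pt d) ∈ interior p.carrier
  proto_no_translate : ∀ p ∈ proto, ∀ q ∈ proto, ∀ x : Pt d,
    q = p.translate x → p = q ∧ x = 0
  lam : ℝ
  one_lt_lam : 1 < lam
  sub : Tile d → Set (Tile d)
  sub_patch : ∀ p ∈ proto, IsPatch (sub p)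
  sub_proto : ∀ p ∈ proto, ∀ t ∈ sub p, ∃ q ∈ proto, ∃ x : Pt d, t = q.translate x
  sub_supp : ∀ p ∈ proto, psupp (sub p) = lam • p.carrier
  sub_translate : ∀ (t : Tile d) (x : Pt d),
    sub (t.translate x) = (fun s => s.translate (lam • x)) '' sub t

namespace SubstSystem

variable {d : ℕ} (S : SubstSystem d)

/-- Tile-wise application of the substitution to a collection of tiles. -/
def subSet (P : Set (Tile d)) : Set (Tile d) := ⋃ t ∈ P, S.sub t

/-- Iterated substitution `ω^n` on collections of tiles. -/
def subIter (n : ℕ) (P : Set (Tile d)) : Set (Tile d) := (S.subSet)^[n] P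

/-- `ω^n(t)` for a single tile `t`. -/
def omegan (n : ℕ) (t : Tile d) : Set (Tile d) := S.subIter n {t}

/-- The continuous hull `Ω`. -/
def Omega : Set (Set (Tile d)) :=
  {T | IsTilingOfSpace T ∧ ∀ P : Set (Tile d), P ⊆ T → IsPatch P →
    ∃ n : ℕ, ∃ p ∈ S.proto, ∃ x : Pt d, P ⊆ translateSet (S.omegan n p) x}

/-- `x` is the puncture of the tile `t`, i.e. `t = p + x` for a prototile `p`. -/
def IsPuncture (t : Tile d) (x : Pt d) : Prop :=
  ∃ p ∈ S.proto, t = p.translate x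

open Classical in
/-- The puncture `x(t)` of a tile `t` (chosen; unique for translates of prototiles). -/
def punc (t : Tile d) : Pt d :=
  if h : ∃ x : Pt d, S.IsPuncture t x then h.choose else 0

/-- The punctured hull (transversal) `Ω_punc`. -/
def OmegaPunc : Set (Set (Tile d)) :=
  {T ∈ S.Omega | ∃ t ∈ T, S.IsPuncture t 0}

end SubstSystem

/-- The tiling metric. -/
def tilingDist {d : ℕ} (T T' : Set (Tile d)) : ℝ :=
  sInf ({1} ∪ {ε : ℝ | 0 < ε ∧ ∃ x x' : Pt d, ‖x‖ < ε ∧ ‖x'‖ < ε ∧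
    tilesAt (translateSet T (-x)) (ball (0 : Pt d) (1 / ε)) =
      tilesAt (translateSet T' (-x')) (ball (0 : Pt d) (1 / ε))})

namespace SubstSystem

variable {d : ℕ} (S : SubstSystem d)

/-- Density of a family of tilings in `Ω_punc` w.r.t. the tiling metric. -/
def DenseInPunc (E : Set (Set (Tile d))) : Prop :=
  ∀ T ∈ S.OmegaPunc, ∀ ε : ℝ, 0 < ε → ∃ T' ∈ E, tilingDist T T' < ε

/-- Openness of a subset of `Ω_punc` w.r.t. the tiling metric (subspace topology). -/
def OpenInPunc (E : Set (Set (Tile d))) : Prop :=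
  E ⊆ S.OmegaPunc ∧ ∀ T ∈ E, ∃ ε : ℝ, 0 < ε ∧
    ∀ T' ∈ S.OmegaPunc, tilingDist T T' < ε → T' ∈ E

/-- The translational equivalence relation `R_punc` on `Ω_punc`. -/
def Rpunc : Set (Set (Tile d) × Set (Tile d)) :=
  {TT | TT.1 ∈ S.OmegaPunc ∧ TT.2 ∈ S.OmegaPunc ∧ ∃ x : Pt d, TT.2 = translateSet TT.1 x}

/-- `Punc(n, p)`: the punctures of the tiles of `ω^n(p)`. -/
def Punc (n : ℕ) (p : Tile d) : Set (Pt d) :=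
  {x | ∃ t ∈ S.omegan n p, S.IsPuncture t x}

/-- `E^n_p(x, y)`. -/
def Eset (n : ℕ) (p : Tile d) (x y : Pt d) : Set (Set (Tile d) × Set (Tile d)) :=
  {TT | ∃ T ∈ S.OmegaPunc, p ∈ T ∧
    TT.1 = translateSet (S.subIter n T) (-x) ∧ TT.2 = translateSet (S.subIter n T) (-y)}

/-- `R_n`. -/
def Rn (n : ℕ) : Set (Set (Tile d) × Set (Tile d)) :=
  ⋃ p ∈ S.proto, ⋃ x ∈ S.Punc n p, ⋃ y ∈ S.Punc n p, S.Eset n p x y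

/-- `R_AF = ∪ₙ R_n`. -/
def RAF : Set (Set (Tile d) × Set (Tile d)) := ⋃ n : ℕ, S.Rn n

/-- `U(P, t)`. -/
def Uset (P : Set (Tile d)) (t : Tile d) : Set (Set (Tile d)) :=
  {T ∈ S.OmegaPunc | translateSet P (-(S.punc t)) ⊆ T}

/-- `V(P, t₁, t₂)`. -/
def Vset (P : Set (Tile d)) (t₁ t₂ : Tile d) : Set (Set (Tile d) × Set (Tile d)) :=
  {TT | TT.1 ∈ S.Uset P t₁ ∧ TT.2 = translateSet TT.1 (S.punc t₁ - S.punc t₂)}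

/-- (A1) primitivity. -/
def Primitive : Prop :=
  ∃ N : ℕ, ∀ p ∈ S.proto, ∀ q ∈ S.proto, ∃ x : Pt d, Tile.translate q x ∈ S.omegan N p

/-- (A2) finite local complexity. -/
def FLC : Prop :=
  ∀ R : ℝ, 0 < R → ∃ Ps : Set (Set (Tile d)), Ps.Finite ∧
    ∀ P : Set (Tile d), IsPatch P → Metric.diam (psupp P) < R →
      (∃ T ∈ S.Omega, P ⊆ T) → ∃ P₀ ∈ Ps, ∃ x : Pt d, P = translateSet P₀ x

/-- (A3) `ω : Ω → Ω` is bijective. -/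
def SubBijective : Prop := Set.BijOn S.subSet S.Omega S.Omega

/-- (A4) `ω` forces its border. -/
def ForcesBorder : Prop :=
  ∃ n : ℕ, ∀ p ∈ S.proto, ∀ T ∈ S.Omega, ∀ T' ∈ S.Omega, ∀ x x' : Pt d,
    translateSet (S.omegan n p) x ⊆ T → translateSet (S.omegan n p) x' ⊆ T' →
    translateSet (tilesAt T ((fun y => y + x) '' psupp (S.omegan n p))) (-x) =
      translateSet (tilesAt T' ((fun y => y + x') '' psupp (S.omegan n p))) (-x')

/-- Prototile boundaries have box-counting dimension strictly less than `d`. -/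
def SmallBoundary : Prop :=
  ∃ c : ℝ, c < d ∧ ∃ K₀ : ℝ, ∀ p ∈ S.proto, ∀ ε : ℝ, 0 < ε →
    ∃ centers : Finset (Pt d), (centers.card : ℝ) ≤ K₀ * ε ^ (-c) ∧
      frontier p.carrier ⊆ ⋃ z ∈ centers, ball z ε

end SubstSystem

/-- A symmetry group action for `(𝒫, ω)`: `G ≤ O(d, ℝ)` acting on tiles, preserving
the prototile set and commuting with the substitution. -/
structure SymmAction {d : ℕ} (S : SubstSystem d) (G : Subgroup (Pt d ≃ₗᵢ[ℝ] Pt d)) where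
  act : G → Tile d → Tile d
  act_carrier : ∀ (g : G) (t : Tile d),
    (act g t).carrier = (g : Pt d ≃ₗᵢ[ℝ] Pt d) '' t.carrier
  act_one : ∀ t : Tile d, act 1 t = t
  act_mul : ∀ (g h : G) (t : Tile d), act (g * h) t = act g (act h t)
  act_proto : ∀ (g : G), ∀ p ∈ S.proto, act g p ∈ S.proto
  act_translate : ∀ (g : G) (t : Tile d) (x : Pt d),
    act g (t.translate x) = (act g t).translate ((g : Pt d ≃ₗᵢ[ℝ] Pt d) x)
  act_sub : ∀ (g : G), ∀ p ∈ S.proto, S.sub (act g p) = act g '' S.sub p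

/-- Action of a group element on a (partial) tiling: `gT = {gt : t ∈ T}`. -/
def SymmAction.actSet {d : ℕ} {S : SubstSystem d} {G : Subgroup (Pt d ≃ₗᵢ[ℝ] Pt d)}
    (σ : SymmAction S G) (g : G) (T : Set (Tile d)) : Set (Tile d) := σ.act g '' T

/-- `G` acts freely on the prototile set. -/
def SymmAction.FreeOnProto {d : ℕ} {S : SubstSystem d} {G : Subgroup (Pt d ≃ₗᵢ[ℝ] Pt d)}
    (σ : SymmAction S G) : Prop := ∀ g : G, ∀ p ∈ S.proto, σ.act g p = p → g = 1

/-- Composition of relations. -/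
def relComp {α : Type*} (R₁ R₂ : Set (α × α)) : Set (α × α) :=
  {q | ∃ z : α, (q.1, z) ∈ R₁ ∧ (z, q.2) ∈ R₂}

/-- Transpose (inverse) of a relation. -/
def relTrans {α : Type*} (R : Set (α × α)) : Set (α × α) := {q | (q.2, q.1) ∈ R}

end

/-!
The heart of the argument is recognizability. Because `ω` is injective on `Ω` and every
prototile contains its puncture in its interior, a tiling `ω^n(T₀) - c`, where `c` is the
puncture of a tile of the supertile `ω^n(p)` with `p ∈ T₀`, determines `T₀`, `p` and `c`.
Applied to the two descriptions of `T`, this makes them coincide; applied to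
`g₂g₁⁻¹(T + x₁) = T + x₂`, it shows that `g₂g₁⁻¹` fixes the prototile `p`, so `g₁ = g₂` by
freeness. Then `T + x₁ = T + x₂`, and `x₁ = x₂` because tilings in `Ω` are non-periodic:
a period `u` of `T = ω^k(T')` yields the period `λ⁻ᵏu` of `T'`, which for large `k` is
shorter than the radius of a ball around the puncture inside every prototile.
-/

namespace Tile

variable {d : ℕ}

@[ext]
theorem ext {t s : Tile d} (hc : t.carrier = s.carrier) (hl : t.label = s.label) : t = s := by
  cases t; cases s; simp_all

@[simp]
theorem translate_carrier (t : Tile d) (a : Pt d) :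
    (t.translate a).carrier = (· + a) '' t.carrier := rfl

@[simp]
theorem translate_translate (t : Tile d) (a b : Pt d) :
    (t.translate a).translate b = t.translate (a + b) := by
  ext1
  · simp only [translate_carrier, Set.image_image, add_assoc]
  · rfl

@[simp]
theorem translate_zero (t : Tile d) : t.translate 0 = t := by
  ext1
  · simp
  · rfl

theorem interior_translate_carrier (t : Tile d) (a : Pt d) :
    interior (t.translate a).carrier = (· + a) '' interior t.carrier :=
  ((Homeomorph.addRight a).image_interior t.carrier).symm

theorem IsTile.translate {t : Tile d} (h : t.IsTile) (a : Pt d) : (t.translate a).IsTile :=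
  let ⟨e⟩ := h
  ⟨((Homeomorph.addRight a).image t.carrier).symm.trans e⟩

end Tile

section Translation

variable {d : ℕ}

theorem mem_translateSet {P : Set (Tile d)} {a : Pt d} {t : Tile d} :
    t ∈ translateSet P a ↔ t.translate (-a) ∈ P := by
  refine ⟨?_, fun h => ⟨_, h, by simp⟩⟩
  rintro ⟨s, hs, rfl⟩
  simpa using hs

@[simp]
theorem translateSet_translateSet (P : Set (Tile d)) (a b : Pt d) :
    translateSet (translateSet P a) b = translateSet P (a + b) := by
  simp only [translateSet, Set.image_image, Tile.translate_translate]

@[simp]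
theorem translateSet_zero (P : Set (Tile d)) : translateSet P 0 = P := by
  simp [translateSet]

theorem psupp_translateSet (P : Set (Tile d)) (a : Pt d) :
    psupp (translateSet P a) = (· + a) '' psupp P := by
  simp only [psupp, translateSet, Set.biUnion_image, Tile.translate_carrier, Set.image_iUnion₂]

theorem IsPartialTiling.eq_of_mem_interior {P : Set (Tile d)} (hP : IsPartialTiling P)
    {t t' : Tile d} (ht : t ∈ P) (ht' : t' ∈ P) {y : Pt d} (hy : y ∈ interior t.carrier)
    (hy' : y ∈ interior t'.carrier) : t = t' := by
  by_contra hne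
  exact Set.eq_empty_iff_forall_notMem.1 (hP.2 t ht t' ht' hne) y ⟨hy, hy'⟩

theorem IsPartialTiling.translate {P : Set (Tile d)} (hP : IsPartialTiling P) (a : Pt d) :
    IsPartialTiling (translateSet P a) := by
  refine ⟨?_, ?_⟩
  · rintro t ⟨s, hs, rfl⟩
    exact (hP.1 s hs).translate a
  · rintro t ⟨s, hs, rfl⟩ t' ⟨s', hs', rfl⟩ hne
    rw [Tile.interior_translate_carrier, Tile.interior_translate_carrier,
      ← Set.image_inter (add_left_injective a), hP.2 s hs s' hs' fun h => hne (h ▸ rfl),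
      Set.image_empty]

theorem isPatch_singleton {t : Tile d} (ht : t.IsTile) : IsPatch {t} :=
  ⟨⟨by simpa using ht, by simp +contextual⟩, Set.finite_singleton t⟩

theorem translateSet_subset_iff {P Q : Set (Tile d)} {a : Pt d} :
    translateSet P a ⊆ Q ↔ P ⊆ translateSet Q (-a) := by
  refine ⟨fun h t ht => mem_translateSet.2 ?_, fun h t ht => ?_⟩
  · simpa using h ⟨t, ht, rfl⟩
  · obtain ⟨s, hs, rfl⟩ := ht
    simpa [mem_translateSet] using h hs

theorem translateSet_singleton (t : Tile d) (a : Pt d) :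
    translateSet {t} a = {t.translate a} :=
  Set.image_singleton

theorem IsPatch.translate {P : Set (Tile d)} (hP : IsPatch P) (a : Pt d) :
    IsPatch (translateSet P a) :=
  ⟨hP.1.translate a, hP.2.image _⟩

theorem IsTilingOfSpace.translate {P : Set (Tile d)} (hP : IsTilingOfSpace P)
    (a : Pt d) : IsTilingOfSpace (translateSet P a) :=
  ⟨hP.1.translate a, by
    rw [psupp_translateSet, hP.2, Set.image_univ_of_surjective (add_right_surjective a)]⟩

end Translation

namespace SubstSystem

open Filter Topology

variable {d : ℕ} (S : SubstSystem d)

def Punctured (P : Set (Tile d)) : Prop := ∀ t ∈ P, ∃ x, S.IsPuncture t x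

theorem lam_pow_pos (n : ℕ) : 0 < S.lam ^ n :=
  pow_pos (zero_lt_one.trans S.one_lt_lam) n

theorem mem_subSet {P : Set (Tile d)} {t : Tile d} : t ∈ S.subSet P ↔ ∃ s ∈ P, t ∈ S.sub s := by
  simp [subSet]

theorem subIter_succ (n : ℕ) (P : Set (Tile d)) :
    S.subIter (n + 1) P = S.subSet (S.subIter n P) :=
  Function.iterate_succ_apply' _ _ _

theorem subIter_mono (n : ℕ) : Monotone (S.subIter n) :=
  Monotone.iterate (fun _ _ h => Set.biUnion_subset_biUnion_left h) n

theorem subSet_translateSet (P : Set (Tile d)) (a : Pt d) :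
    S.subSet (translateSet P a) = translateSet (S.subSet P) (S.lam • a) := by
  simp only [subSet, translateSet, Set.biUnion_image, S.sub_translate, Set.image_iUnion₂]

theorem subIter_translateSet (n : ℕ) (P : Set (Tile d)) (a : Pt d) :
    S.subIter n (translateSet P a) = translateSet (S.subIter n P) (S.lam ^ n • a) := by
  induction n with
  | zero => simp [subIter]
  | succ n ih => rw [subIter_succ, ih, subSet_translateSet, subIter_succ, smul_smul, ← pow_succ']

variable {S}

theorem isPuncture_zero {p : Tile d} (hp : p ∈ S.proto) : S.IsPuncture p 0 :=
  ⟨p, hp, by simp⟩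

theorem mem_interior_translate_proto {q : Tile d} (hq : q ∈ S.proto) (x : Pt d) :
    x ∈ interior (q.translate x).carrier := by
  rw [Tile.interior_translate_carrier]
  exact ⟨0, S.proto_zero_mem q hq, zero_add x⟩

theorem punctured_singleton {t : Tile d} (ht : ∃ x, S.IsPuncture t x) : S.Punctured {t} := by
  rintro _ rfl
  exact ht

theorem punctured_sub {t : Tile d} (ht : ∃ x, S.IsPuncture t x) : S.Punctured (S.sub t) := by
  obtain ⟨x, q, hq, rfl⟩ := ht
  rw [S.sub_translate]
  rintro _ ⟨s, hs, rfl⟩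
  obtain ⟨r, hr, w, rfl⟩ := S.sub_proto q hq s hs
  exact ⟨w + S.lam • x, r, hr, by simp⟩

theorem Punctured.subIter {P : Set (Tile d)} (hP : S.Punctured P) (n : ℕ) :
    S.Punctured (S.subIter n P) := by
  induction n with
  | zero => exact hP
  | succ n ih =>
    intro t ht
    obtain ⟨s, hs, hts⟩ := S.mem_subSet.1 (S.subIter_succ n P ▸ ht)
    exact punctured_sub (ih s hs) t hts

theorem punctured_of_mem_Omega {T : Set (Tile d)} (hT : T ∈ S.Omega) : S.Punctured T := by
  intro t ht
  obtain ⟨m, q, hq, z, hsub⟩ :=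
    hT.2 {t} (Set.singleton_subset_iff.2 ht) (isPatch_singleton (hT.1.1.1 t ht))
  obtain ⟨s, hs, rfl⟩ := hsub rfl
  obtain ⟨w, r, hr, rfl⟩ := (punctured_singleton ⟨0, isPuncture_zero hq⟩).subIter m s hs
  exact ⟨w + z, r, hr, by simp⟩

theorem translateSet_mem_Omega {T : Set (Tile d)} (hT : T ∈ S.Omega) (a : Pt d) :
    translateSet T a ∈ S.Omega := by
  refine ⟨hT.1.translate a, fun P hPT hP => ?_⟩
  obtain ⟨m, q, hq, w, hw⟩ :=
    hT.2 _ (translateSet_subset_iff.2 (by simpa using hPT)) (hP.translate (-a))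
  exact ⟨m, q, hq, w + a, by simpa using translateSet_subset_iff.1 hw⟩

theorem carrier_subset_of_mem_sub {t s : Tile d} (ht : ∃ x, S.IsPuncture t x)
    (hs : s ∈ S.sub t) : s.carrier ⊆ S.lam • t.carrier := by
  obtain ⟨x, q, hq, rfl⟩ := ht
  rw [S.sub_translate] at hs
  obtain ⟨s', hs', rfl⟩ := hs
  rintro _ ⟨y, hy, rfl⟩
  obtain ⟨w, hw, rfl⟩ : y ∈ S.lam • q.carrier := S.sub_supp q hq ▸ Set.mem_biUnion hs' hy
  exact ⟨w + x, ⟨w, hw, rfl⟩, smul_add _ _ _⟩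

theorem carrier_subset_of_mem_subIter {t s : Tile d} (ht : ∃ x, S.IsPuncture t x) {n : ℕ}
    (hs : s ∈ S.subIter n {t}) : s.carrier ⊆ S.lam ^ n • t.carrier := by
  induction n generalizing s with
  | zero => rw [Set.mem_singleton_iff.1 hs, pow_zero, one_smul]
  | succ n ih =>
    obtain ⟨u, hu, hsu⟩ := S.mem_subSet.1 (S.subIter_succ n _ ▸ hs)
    calc s.carrier ⊆ S.lam • u.carrier :=
          carrier_subset_of_mem_sub ((punctured_singleton ht).subIter n u hu) hsu
      _ ⊆ S.lam • S.lam ^ n • t.carrier := Set.smul_set_mono (ih hu)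
      _ = S.lam ^ (n + 1) • t.carrier := by rw [smul_smul, pow_succ']

theorem eq_of_mem_subIter_singleton {P : Set (Tile d)} (hP : IsPartialTiling P)
    (hPp : S.Punctured P) {n : ℕ} {t₁ t₂ s : Tile d} (ht₁ : t₁ ∈ P) (ht₂ : t₂ ∈ P)
    (hs₁ : s ∈ S.subIter n {t₁}) (hs₂ : s ∈ S.subIter n {t₂}) {y : Pt d}
    (hy : y ∈ interior s.carrier) : t₁ = t₂ := by
  have hint : ∀ t ∈ P, s ∈ S.subIter n {t} → (S.lam ^ n)⁻¹ • y ∈ interior t.carrier := by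
    intro t ht hs
    have := interior_mono (carrier_subset_of_mem_subIter (hPp t ht) hs) hy
    rw [interior_smul₀ (S.lam_pow_pos n).ne'] at this
    exact (Set.mem_smul_set_iff_inv_smul_mem₀ (S.lam_pow_pos n).ne' _ _).1 this
  exact hP.eq_of_mem_interior ht₁ ht₂ (hint t₁ ht₁ hs₁) (hint t₂ ht₂ hs₂)

theorem eq_zero_of_translate_mem {P : Set (Tile d)} (hP : IsPartialTiling P) {q : Tile d}
    (hq : q ∈ S.proto) {z v : Pt d} (hz : q.translate z ∈ P) (hzv : q.translate (z + v) ∈ P)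
    (hv : v ∈ interior q.carrier) : v = 0 := by
  have heq : q.translate (z + v) = q.translate z :=
    hP.eq_of_mem_interior hzv hz (mem_interior_translate_proto hq (z + v))
      (by rw [Tile.interior_translate_carrier]; exact ⟨v, hv, add_comm v z⟩)
  have hqv : q = q.translate v := by simpa using congrArg (·.translate (-z)) heq.symm
  exact (S.proto_no_translate q hq q hq v hqv).2

theorem exists_ball_subset_interior_proto :
    ∃ δ > 0, ∀ p ∈ S.proto, ball (0 : Pt d) δ ⊆ interior p.carrier := by
  have h : ∀ p ∈ S.proto, ∀ᶠ δ in 𝓝[>] (0 : ℝ), ball (0 : Pt d) δ ⊆ interior p.carrier := by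
    intro p hp
    obtain ⟨ε, hε, hball⟩ := Metric.isOpen_iff.1 isOpen_interior 0 (S.proto_zero_mem p hp)
    filter_upwards [Ioo_mem_nhdsGT hε] with δ hδ using (ball_subset_ball hδ.2.le).trans hball
  obtain ⟨δ, hδ, hpos⟩ :=
    (((eventually_all_finite S.proto_finite).2 h).and self_mem_nhdsWithin).exists
  exact ⟨δ, hpos, hδ⟩

end SubstSystem

namespace SubstSystem.SubBijective

variable {d : ℕ} {S : SubstSystem d} (hA3 : S.SubBijective)
include hA3

theorem subIter_bijOn (n : ℕ) : Set.BijOn (S.subIter n) S.Omega S.Omega :=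
  Set.BijOn.iterate hA3 n

theorem eq_translateSet_of_subIter {n : ℕ} {T₀ T₁ : Set (Tile d)} (hT₀ : T₀ ∈ S.Omega)
    (hT₁ : T₁ ∈ S.Omega) {a : Pt d} (h : translateSet (S.subIter n T₀) a = S.subIter n T₁) :
    T₁ = translateSet T₀ ((S.lam ^ n)⁻¹ • a) := by
  refine (hA3.subIter_bijOn n).injOn hT₁ (S.translateSet_mem_Omega hT₀ _) ?_
  rw [subIter_translateSet, smul_inv_smul₀ (S.lam_pow_pos n).ne', h]

theorem eq_zero_of_translateSet_eq_self {T : Set (Tile d)} (hT : T ∈ S.Omega) {u : Pt d}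
    (hu : translateSet T u = T) : u = 0 := by
  obtain ⟨δ, hδ, hball⟩ := S.exists_ball_subset_interior_proto
  obtain ⟨k, hk⟩ := pow_unbounded_of_one_lt (‖u‖ / δ) S.one_lt_lam
  obtain ⟨T', hT', rfl⟩ := (hA3.subIter_bijOn k).surjOn hT
  have hper : translateSet T' ((S.lam ^ k)⁻¹ • u) = T' :=
    (hA3.eq_translateSet_of_subIter hT' hT' hu).symm
  have hsmall : ‖(S.lam ^ k)⁻¹ • u‖ < δ := by
    rw [norm_smul, norm_inv, Real.norm_of_nonneg (S.lam_pow_pos k).le,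
      inv_mul_lt_iff₀ (S.lam_pow_pos k)]
    rwa [div_lt_iff₀ hδ] at hk
  obtain ⟨t, ht, -⟩ : ∃ t ∈ T', (0 : Pt d) ∈ t.carrier := by
    simpa [psupp] using hT'.1.2.ge (Set.mem_univ (0 : Pt d))
  obtain ⟨z, q, hq, rfl⟩ := S.punctured_of_mem_Omega hT' t ht
  have hz : q.translate (z + (S.lam ^ k)⁻¹ • u) ∈ T' := by
    rw [← hper, mem_translateSet]
    simpa using ht
  simpa [(S.lam_pow_pos k).ne'] using
    eq_zero_of_translate_mem hT'.1.1 hq ht hz (hball q hq (mem_ball_zero_iff.2 hsmall))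

theorem eq_of_translateSet_subIter_eq {n : ℕ} {T₀ T₁ : Set (Tile d)} (hT₀ : T₀ ∈ S.Omega)
    (hT₁ : T₁ ∈ S.Omega)
    {p r : Tile d} (hp : p ∈ S.proto) (hpT : p ∈ T₀) {c : Pt d} (hc : c ∈ S.Punc n p)
    (hr : r ∈ S.proto) (hrT : r ∈ T₁) {c' : Pt d} (hc' : c' ∈ S.Punc n r)
    (h : translateSet (S.subIter n T₀) (-c) = translateSet (S.subIter n T₁) (-c')) :
    p = r ∧ c = c' ∧ T₀ = T₁ := by
  obtain ⟨_, hct, q, hq, rfl⟩ := hc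
  obtain ⟨_, hct', q', hq', rfl⟩ := hc'
  have hqW : q ∈ translateSet (S.subIter n T₀) (-c) :=
    mem_translateSet.2 (by simpa using S.subIter_mono n (Set.singleton_subset_iff.2 hpT) hct)
  have hq'W : q' ∈ translateSet (S.subIter n T₀) (-c) :=
    h ▸ mem_translateSet.2
      (by simpa using S.subIter_mono n (Set.singleton_subset_iff.2 hrT) hct')
  obtain rfl : q = q' := (((hA3.subIter_bijOn n).mapsTo hT₀).1.1.translate _).eq_of_mem_interior
    hqW hq'W (S.proto_zero_mem q hq) (S.proto_zero_mem q' hq')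
  set v := (S.lam ^ n)⁻¹ • (c' - c)
  have hT₁v : T₁ = translateSet T₀ v :=
    hA3.eq_translateSet_of_subIter hT₀ hT₁
      (by simpa [neg_add_eq_sub] using congrArg (translateSet · c') h)
  have hrv : r.translate (-v) ∈ T₀ := by simpa [mem_translateSet, hT₁v] using hrT
  have hcrv : q.translate c ∈ S.subIter n {r.translate (-v)} := by
    rw [← translateSet_singleton, subIter_translateSet, smul_neg,
      smul_inv_smul₀ (S.lam_pow_pos n).ne', mem_translateSet]
    simpa [omegan] using hct'
  have hpr : p = r.translate (-v) :=
    eq_of_mem_subIter_singleton hT₀.1.1 (S.punctured_of_mem_Omega hT₀) hpT hrv hct hcrv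
      (mem_interior_translate_proto hq c)
  obtain ⟨rfl, hv⟩ := S.proto_no_translate p hp r hr v (by simp [hpr])
  have hcc : c = c' := by
    simpa [v, (S.lam_pow_pos n).ne', sub_eq_zero, eq_comm] using hv
  exact ⟨rfl, hcc, by simp [hT₁v, hv]⟩

end SubstSystem.SubBijective

namespace SymmAction

variable {d : ℕ} {S : SubstSystem d} {G : Subgroup (Pt d ≃ₗᵢ[ℝ] Pt d)} (σ : SymmAction S G)

theorem actSet_actSet (g h : G) (P : Set (Tile d)) :
    σ.actSet g (σ.actSet h P) = σ.actSet (g * h) P := by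
  simp only [actSet, Set.image_image, σ.act_mul]

theorem actSet_one (P : Set (Tile d)) : σ.actSet 1 P = P := by
  simp [actSet, σ.act_one]

theorem actSet_inv_actSet (g : G) (P : Set (Tile d)) : σ.actSet g⁻¹ (σ.actSet g P) = P := by
  rw [actSet_actSet, inv_mul_cancel, actSet_one]

theorem actSet_mono (g : G) : Monotone (σ.actSet g) :=
  fun _ _ h => Set.image_mono h

theorem actSet_translateSet (g : G) (P : Set (Tile d)) (a : Pt d) :
    σ.actSet g (translateSet P a) = translateSet (σ.actSet g P) ((g : Pt d ≃ₗᵢ[ℝ] Pt d) a) := by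
  simp only [actSet, translateSet, Set.image_image, σ.act_translate]

theorem isTile_act (g : G) {t : Tile d} (ht : t.IsTile) : (σ.act g t).IsTile :=
  let ⟨e⟩ := ht
  ⟨σ.act_carrier g t ▸ ((g : Pt d ≃ₗᵢ[ℝ] Pt d).toHomeomorph.image t.carrier).symm.trans e⟩

theorem isPartialTiling_actSet (g : G) {P : Set (Tile d)} (hP : IsPartialTiling P) :
    IsPartialTiling (σ.actSet g P) := by
  refine ⟨?_, ?_⟩
  · rintro t ⟨s, hs, rfl⟩
    exact σ.isTile_act g (hP.1 s hs)
  · rintro t ⟨s, hs, rfl⟩ t' ⟨s', hs', rfl⟩ hne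
    have himage (A : Set (Pt d)) :
        interior ((g : Pt d ≃ₗᵢ[ℝ] Pt d) '' A) = (g : Pt d ≃ₗᵢ[ℝ] Pt d) '' interior A :=
      ((g : Pt d ≃ₗᵢ[ℝ] Pt d).toHomeomorph.image_interior A).symm
    rw [σ.act_carrier, σ.act_carrier, himage, himage,
      ← Set.image_inter (g : Pt d ≃ₗᵢ[ℝ] Pt d).injective, hP.2 s hs s' hs' (fun h => hne (h ▸ rfl)),
      Set.image_empty]

theorem sub_act (g : G) {t : Tile d} (ht : ∃ x, S.IsPuncture t x) :
    S.sub (σ.act g t) = σ.act g '' S.sub t := by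
  obtain ⟨x, q, hq, rfl⟩ := ht
  simp only [σ.act_translate, S.sub_translate, σ.act_sub g q hq, Set.image_image, map_smul]

theorem subSet_actSet (g : G) {P : Set (Tile d)} (hP : S.Punctured P) :
    S.subSet (σ.actSet g P) = σ.actSet g (S.subSet P) := by
  simp only [SubstSystem.subSet, actSet, Set.biUnion_image, Set.image_iUnion₂]
  exact Set.iUnion₂_congr fun t ht => σ.sub_act g (hP t ht)

theorem subIter_actSet (g : G) {P : Set (Tile d)} (hP : S.Punctured P) (n : ℕ) :
    S.subIter n (σ.actSet g P) = σ.actSet g (S.subIter n P) := by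
  induction n with
  | zero => rfl
  | succ n ih => rw [S.subIter_succ, ih, σ.subSet_actSet g (hP.subIter n), S.subIter_succ]

theorem actSet_omegan (g : G) {p : Tile d} (hp : p ∈ S.proto) (n : ℕ) :
    σ.actSet g (S.omegan n p) = S.omegan n (σ.act g p) := by
  rw [SubstSystem.omegan, SubstSystem.omegan, ← Set.image_singleton,
    ← σ.subIter_actSet g (SubstSystem.punctured_singleton ⟨0, SubstSystem.isPuncture_zero hp⟩)]
  rfl

theorem act_mem_Punc (g : G) {n : ℕ} {p : Tile d} (hp : p ∈ S.proto) {y : Pt d}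
    (hy : y ∈ S.Punc n p) : (g : Pt d ≃ₗᵢ[ℝ] Pt d) y ∈ S.Punc n (σ.act g p) := by
  obtain ⟨_, ht, q, hq, rfl⟩ := hy
  refine ⟨σ.act g (q.translate y), ?_, σ.act g q, σ.act_proto g q hq, σ.act_translate g q y⟩
  rw [← σ.actSet_omegan g hp]
  exact Set.mem_image_of_mem _ ht

theorem actSet_mem_Omega (g : G) {T : Set (Tile d)} (hT : T ∈ S.Omega) :
    σ.actSet g T ∈ S.Omega := by
  refine ⟨⟨σ.isPartialTiling_actSet g hT.1.1, ?_⟩, fun P hPT hP => ?_⟩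
  · simp only [psupp, actSet, Set.biUnion_image, σ.act_carrier, ← Set.image_iUnion₂]
    rw [← psupp, hT.1.2, Set.image_univ_of_surjective (g : Pt d ≃ₗᵢ[ℝ] Pt d).surjective]
  · have hP' : σ.actSet g⁻¹ P ⊆ T := by
      simpa only [actSet_inv_actSet] using σ.actSet_mono g⁻¹ hPT
    obtain ⟨m, q, hq, w, hw⟩ :=
      hT.2 _ hP' ⟨σ.isPartialTiling_actSet g⁻¹ hP.1, hP.2.image _⟩
    refine ⟨m, σ.act g q, σ.act_proto g q hq, (g : Pt d ≃ₗᵢ[ℝ] Pt d) w, ?_⟩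
    rw [← σ.actSet_omegan g hq, ← actSet_translateSet]
    simpa only [actSet_actSet, mul_inv_cancel, actSet_one] using σ.actSet_mono g hw

end SymmAction

theorem SubstSystem.mem_Rn {d : ℕ} (S : SubstSystem d) {n : ℕ} {T₁ T₂ : Set (Tile d)} :
    (T₁, T₂) ∈ S.Rn n ↔ ∃ p ∈ S.proto, ∃ x ∈ S.Punc n p, ∃ y ∈ S.Punc n p, ∃ T ∈ S.OmegaPunc,
      p ∈ T ∧ T₁ = translateSet (S.subIter n T) (-x) ∧ T₂ = translateSet (S.subIter n T) (-y) := by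
  simp [SubstSystem.Rn, SubstSystem.Eset]

theorem stmt0_general {d : ℕ} (S : SubstSystem d)
    (hA3 : S.SubBijective)
    (G : Subgroup (Pt d ≃ₗᵢ[ℝ] Pt d)) (σ : SymmAction S G)
    (hfree : σ.FreeOnProto)
    (n : ℕ) (T : Set (Tile d)) (hT : T ∈ S.OmegaPunc)
    (x₁ x₂ : Pt d) (g₁ g₂ : G)
    (h1 : (T, translateSet T x₁) ∈ S.Rn n)
    (h2 : (T, translateSet T x₂) ∈ S.Rn n)
    (heq : σ.actSet g₁⁻¹ (translateSet T x₁) = σ.actSet g₂⁻¹ (translateSet T x₂)) :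
    g₁ = g₂ ∧ x₁ = x₂ := by
  obtain ⟨p, hp, x, hx, y, hy, T₀, hT₀, hpT₀, hT₀x, hT₀y⟩ := S.mem_Rn.1 h1
  obtain ⟨p', hp', x', hx', y', hy', T₀', hT₀', hp'T₀', hT₀'x', hT₀'y'⟩ := S.mem_Rn.1 h2
  obtain ⟨rfl, rfl, rfl⟩ :=
    hA3.eq_of_translateSet_subIter_eq hT₀.1 hT₀'.1 hp hpT₀ hx hp' hp'T₀' hx'
      (hT₀x.symm.trans hT₀'x')
  set g := g₂ * g₁⁻¹
  have hgy : translateSet (S.subIter n (σ.actSet g T₀)) (-(g : Pt d ≃ₗᵢ[ℝ] Pt d) y) =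
      translateSet (S.subIter n T₀) (-y') := by
    calc _ = σ.actSet g₂ (σ.actSet g₁⁻¹ (translateSet T x₁)) := by
          rw [σ.actSet_actSet, hT₀y, σ.actSet_translateSet, map_neg,
            σ.subIter_actSet g (S.punctured_of_mem_Omega hT₀.1)]
      _ = _ := by rw [heq, σ.actSet_actSet, mul_inv_cancel, σ.actSet_one, hT₀'y']
  obtain ⟨hgp, -, -⟩ := hA3.eq_of_translateSet_subIter_eq (σ.actSet_mem_Omega g hT₀.1) hT₀.1
    (σ.act_proto g p hp) (Set.mem_image_of_mem _ hpT₀) (σ.act_mem_Punc g hp hy) hp hpT₀ hy' hgy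
  obtain rfl : g₁ = g₂ := (mul_inv_eq_one.1 (hfree g p hp hgp)).symm
  have hTx : translateSet T x₁ = translateSet T x₂ := by
    simpa only [σ.actSet_actSet, mul_inv_cancel, σ.actSet_one] using congrArg (σ.actSet g₁) heq
  refine ⟨rfl, sub_eq_zero.1 (hA3.eq_zero_of_translateSet_eq_self hT.1 ?_)⟩
  simpa [sub_eq_add_neg] using congrArg (translateSet · (-x₂)) hTx

/-- For a finite symmetry group `G` acting freely on `𝒫` and any `n`,
the semidirect product `R_n ⋊ G` is principal: if `(T, T+x₁), (T, T+x₂) ∈ R_n` and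
`g₁⁻¹(T+x₁) = g₂⁻¹(T+x₂)` then `g₁ = g₂` and `x₁ = x₂`. -/
theorem stmt0 {d : ℕ} (hd : 1 ≤ d) (S : SubstSystem d)
    (hA1 : S.Primitive) (hA2 : S.FLC) (hA3 : S.SubBijective)
    (G : Subgroup (Pt d ≃ₗᵢ[ℝ] Pt d)) [Finite G] (σ : SymmAction S G)
    (hfree : σ.FreeOnProto)
    (n : ℕ) (T : Set (Tile d)) (hT : T ∈ S.OmegaPunc)
    (x₁ x₂ : Pt d) (g₁ g₂ : G)
    (h1 : (T, translateSet T x₁) ∈ S.Rn n)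
    (h2 : (T, translateSet T x₂) ∈ S.Rn n)
    (heq : σ.actSet g₁⁻¹ (translateSet T x₁) = σ.actSet g₂⁻¹ (translateSet T x₂)) :
    g₁ = g₂ ∧ x₁ = x₂ :=
  stmt0_general S hA3 G σ hfree n T hT x₁ x₂ g₁ g₂ h1 h2 heq
end

section
/- Let G be a finite group, A a unital C*-algebra, and α: G → Aut(A) an action. Suppose there is an increasing sequence (A_m) of unital *-subalgebras of A with dense union, each globally invariant under α, such that for each m there are a finite index set I(m), an integer k(m) ≥ 1, and a *-isomorphism A_m ≅ ⊕_{i∈I(m)} ⊕_{h∈G} M_{k(m)}(ℂ) under which, for every g ∈ G and i ∈ I(m), α_g maps the (i, h)-summand onto the (i, gh)-summand (i.e. the restriction of α to each block ⊕_{h∈G} M_{k(m)}(ℂ) freely and transitively permutes its summands). Then α has the Rokhlin property. -/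
noncomputable section

/-- Let `G` be a finite group acting on a unital C*-algebra `A` by an
action `α`. If `A` has an increasing sequence of `α`-invariant unital *-subalgebras
`A_m` with dense union, each *-isomorphic to `⊕_{i ∈ I(m)} ⊕_{h ∈ G} M_{k(m)}(ℂ)` in
such a way that `α_g` carries the `(i, h)`-summand onto the `(i, gh)`-summand, then
`α` has the Rokhlin property. -/
theorem stmt6 {A : Type*} [NormedRing A] [StarRing A] [CStarRing A]
    [NormedAlgebra ℂ A] [StarModule ℂ A] [CompleteSpace A]
    {G : Type*} [Group G] [Fintype G]
    (α : G → (A ≃⋆ₐ[ℂ] A))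
    (hact : ∀ (g h : G) (a : A), α (g * h) a = α g (α h a))
    (Am : ℕ → StarSubalgebra ℂ A)
    (hmono : Monotone Am)
    (hdense : Dense (⋃ m : ℕ, (Am m : Set A)))
    (hinv : ∀ (m : ℕ) (g : G), ∀ a ∈ Am m, α g a ∈ Am m)
    (I : ℕ → Type) (hIfin : ∀ m, Finite (I m)) (hIne : ∀ m, Nonempty (I m))
    (k : ℕ → ℕ) (hk : ∀ m, 1 ≤ k m)
    (φ : ∀ m : ℕ, (Am m) ≃⋆ₐ[ℂ] ((I m × G) → Matrix (Fin (k m)) (Fin (k m)) ℂ))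
    (hsummand : ∀ (m : ℕ) (g : G) (a : Am m) (i : I m) (h : G),
      (∀ (j : I m) (h' : G), (j, h') ≠ (i, h) → φ m a (j, h') = 0) →
      ∀ (j : I m) (h' : G), (j, h') ≠ (i, g * h) →
        φ m ⟨α g (a : A), hinv m g a a.2⟩ (j, h') = 0) :
    ∀ (F : Finset A) (ε : ℝ), 0 < ε →
      ∃ e : G → A,
        (∀ g, IsSelfAdjoint (e g) ∧ e g * e g = e g) ∧
        (∀ g h, g ≠ h → e g * e h = 0) ∧
        (∀ g h, ‖α g (e h) - e (g * h)‖ < ε) ∧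
        (∀ g, ∀ a ∈ F, ‖e g * a - a * e g‖ < ε) ∧
        (∑ g : G, e g) = 1 := by
  intro F ε hε
  classical
  have hε2 : (0:ℝ) < ε/2 := by positivity
  -- pick approximants from the union of the A_m
  have key : ∀ a ∈ F, ∃ q : ℕ × A, q.2 ∈ Am q.1 ∧ ‖a - q.2‖ < ε/2 := by
    intro a _
    obtain ⟨y, hy, hdy⟩ := hdense.exists_dist_lt a hε2
    rw [Set.mem_iUnion] at hy
    obtain ⟨m, hm⟩ := hy
    exact ⟨(m, y), hm, by rwa [dist_eq_norm] at hdy⟩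
  choose! q hq1 hq2 using key
  set M := F.sup fun a => (q a).1 with hMdef
  haveI : Fintype (I M) := Fintype.ofFinite _
  -- the central projections
  set P : G → Am M := fun g =>
    (φ M).symm (fun jh => if jh.2 = g then 1 else 0) with hPdef
  have hψP : ∀ g, (φ M) (P g)
      = (fun jh : I M × G => if jh.2 = g then (1 : Matrix (Fin (k M)) (Fin (k M)) ℂ) else 0) :=
    fun g => (φ M).apply_symm_apply _
  -- basic algebraic facts about P
  have hstar : ∀ g, star (P g) = P g := by
    intro g
    apply EquivLike.injective (φ M)
    rw [map_star (φ M) (P g), hψP g]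
    funext jh
    simp [star_one, apply_ite (star : Matrix (Fin (k M)) (Fin (k M)) ℂ → _)]
  have hmul : ∀ g h, P g * P h = if g = h then P g else 0 := by
    intro g h
    apply EquivLike.injective (φ M)
    rw [map_mul, hψP g, hψP h]
    by_cases hgh : g = h
    · subst hgh
      rw [if_pos rfl, hψP g]
      funext jh
      by_cases hj : jh.2 = g <;> simp [hj]
    · rw [if_neg hgh, map_zero]
      funext jh
      by_cases hj : jh.2 = g
      · have : jh.2 ≠ h := by rw [hj]; exact hgh
        simp [hj, this, hgh]
      · simp [hj]
  have hsum : (∑ g : G, P g) = 1 := by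
    apply EquivLike.injective (φ M)
    rw [map_sum, map_one]
    funext jh
    have : (∑ g : G, (φ M) (P g)) jh = ∑ g : G, ((φ M) (P g)) jh := by
      simp [Finset.sum_apply]
    rw [this]
    have : ∀ g : G, ((φ M) (P g)) jh
        = if jh.2 = g then (1 : Matrix (Fin (k M)) (Fin (k M)) ℂ) else 0 := by
      intro g; rw [hψP g]
    simp only [this]
    rw [Finset.sum_ite_eq Finset.univ jh.2 (fun _ => (1 : Matrix (Fin (k M)) (Fin (k M)) ℂ))]
    simp
  -- the single-summand projections
  set Q : I M → G → Am M := fun i h =>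
    (φ M).symm (fun jh => if jh = (i, h) then 1 else 0) with hQdef
  have hψQ : ∀ i h, (φ M) (Q i h)
      = (fun jh : I M × G => if jh = (i, h) then (1 : Matrix (Fin (k M)) (Fin (k M)) ℂ) else 0) :=
    fun i h => (φ M).apply_symm_apply _
  have hPQ : ∀ h : G, P h = ∑ i : I M, Q i h := by
    intro h
    apply EquivLike.injective (φ M)
    rw [map_sum, hψP h]
    funext jh
    have : (∑ i : I M, (φ M) (Q i h)) jh = ∑ i : I M, ((φ M) (Q i h)) jh := by
      simp [Finset.sum_apply]
    rw [this]
    simp only [hψQ]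
    by_cases hj : jh.2 = h
    · rw [if_pos hj]
      have : ∀ i : I M, (if jh = (i, h) then (1 : Matrix (Fin (k M)) (Fin (k M)) ℂ) else 0)
          = if jh.1 = i then 1 else 0 := by
        intro i
        by_cases hji : jh.1 = i
        · have : jh = (i, h) := Prod.ext hji hj
          simp [this, hji]
        · have : jh ≠ (i, h) := by
            intro hc; exact hji (by rw [hc])
          simp [this, hji]
      simp only [this]
      rw [Finset.sum_ite_eq Finset.univ jh.1 (fun _ => (1 : Matrix (Fin (k M)) (Fin (k M)) ℂ))]
      simp
    · rw [if_neg hj]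
      symm
      apply Finset.sum_eq_zero
      intro i _
      have : jh ≠ (i, h) := by
        intro hc; exact hj (by rw [hc])
      simp [this]
  -- equivariance: α g (P h) = P (g * h) exactly
  have hequiv : ∀ g h : G, (⟨α g ((P h : A)), hinv M g _ (P h).2⟩ : Am M) = P (g * h) := by
    intro g h
    -- support of α g (Q i h)
    have hsupp : ∀ (i : I M) (j : I M) (h' : G), (j, h') ≠ (i, g * h) →
        (φ M) (⟨α g ((Q i h : A)), hinv M g _ (Q i h).2⟩ : Am M) (j, h') = 0 := by
      intro i j h' hne
      refine hsummand M g (Q i h) i h ?_ j h' hne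
      intro j' h'' hne'
      rw [hψQ]
      simp [hne']
    -- α g (P h) decomposes as a sum
    have hdecomp : (⟨α g ((P h : A)), hinv M g _ (P h).2⟩ : Am M)
        = ∑ i : I M, (⟨α g ((Q i h : A)), hinv M g _ (Q i h).2⟩ : Am M) := by
      apply Subtype.ext
      push_cast
      rw [hPQ h]
      push_cast
      rw [map_sum]
    -- support of α g (P h) is contained in column g*h
    have hsuppP : ∀ (j : I M) (h' : G), h' ≠ g * h →
        (φ M) (⟨α g ((P h : A)), hinv M g _ (P h).2⟩ : Am M) (j, h') = 0 := by
      intro j h' hne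
      rw [hdecomp, map_sum]
      have : (∑ i : I M, (φ M) (⟨α g ((Q i h : A)), hinv M g _ (Q i h).2⟩ : Am M)) (j, h')
          = ∑ i : I M, ((φ M) (⟨α g ((Q i h : A)), hinv M g _ (Q i h).2⟩ : Am M)) (j, h') := by
        simp [Finset.sum_apply]
      rw [this]
      apply Finset.sum_eq_zero
      intro i _
      exact hsupp i j h' (by simp [Prod.ext_iff]; intro _; exact hne)
    -- the sum over h of α g (P h) is 1
    have hsum1 : (∑ h' : G, (⟨α g ((P h' : A)), hinv M g _ (P h').2⟩ : Am M)) = 1 := by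
      apply Subtype.ext
      push_cast
      rw [← map_sum]
      have : (∑ h' : G, ((P h' : A))) = ((∑ h' : G, P h' : Am M) : A) := by push_cast; ring
      rw [this, hsum]
      simp
    -- conclude
    apply EquivLike.injective (φ M)
    rw [hψP]
    funext jh
    obtain ⟨j, h'⟩ := jh
    show (φ M) (⟨α g ((P h : A)), hinv M g _ (P h).2⟩ : Am M) (j, h')
        = if h' = g * h then (1 : Matrix (Fin (k M)) (Fin (k M)) ℂ) else 0
    by_cases hc : h' = g * h
    · rw [if_pos hc]
      subst hc
      -- evaluate the sum identity at (j, g*h)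
      have h1 : (∑ h' : G, (φ M) (⟨α g ((P h' : A)), hinv M g _ (P h').2⟩ : Am M)) (j, g * h)
          = (1 : (I M × G) → Matrix (Fin (k M)) (Fin (k M)) ℂ) (j, g * h) := by
        rw [← map_sum, hsum1, map_one]
      have h2 : (∑ h' : G, (φ M) (⟨α g ((P h' : A)), hinv M g _ (P h').2⟩ : Am M)) (j, g * h)
          = ∑ h' : G, ((φ M) (⟨α g ((P h' : A)), hinv M g _ (P h').2⟩ : Am M)) (j, g * h) := by
        simp [Finset.sum_apply]
      rw [h2] at h1
      rw [Finset.sum_eq_single h] at h1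
      · rw [h1]; simp
      · intro h'' _ hne
        -- for h'' ≠ h, support is in column g * h'' ≠ g * h
        have : ∀ (j' : I M) (h3 : G), h3 ≠ g * h'' →
            (φ M) (⟨α g ((P h'' : A)), hinv M g _ (P h'').2⟩ : Am M) (j', h3) = 0 := by
          intro j' h3 hne3
          -- need same statement as hsuppP but for h''
          have hdecomp'' : (⟨α g ((P h'' : A)), hinv M g _ (P h'').2⟩ : Am M)
              = ∑ i : I M, (⟨α g ((Q i h'' : A)), hinv M g _ (Q i h'').2⟩ : Am M) := by
            apply Subtype.ext
            push_cast
            rw [hPQ h'']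
            push_cast
            rw [map_sum]
          rw [hdecomp'', map_sum]
          have : (∑ i : I M, (φ M) (⟨α g ((Q i h'' : A)), hinv M g _ (Q i h'').2⟩ : Am M)) (j', h3)
              = ∑ i : I M, ((φ M) (⟨α g ((Q i h'' : A)), hinv M g _ (Q i h'').2⟩ : Am M)) (j', h3) := by
            simp [Finset.sum_apply]
          rw [this]
          apply Finset.sum_eq_zero
          intro i _
          refine hsummand M g (Q i h'') i h'' ?_ j' h3 (by simp [Prod.ext_iff]; intro _; exact hne3)
          intro j'' h4 hne4
          rw [hψQ]
          simp [hne4]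
        exact this j (g * h) (by intro hc; exact hne (mul_left_cancel hc).symm)
      · intro hcon; exact absurd (Finset.mem_univ h) hcon
    · rw [if_neg hc]
      exact hsuppP j h' hc
  -- centrality of P in Am M
  have hcentral : ∀ (g : G) (b : Am M), P g * b = b * P g := by
    intro g b
    apply EquivLike.injective (φ M)
    rw [map_mul, map_mul, hψP g]
    funext jh
    by_cases hj : jh.2 = g <;> simp [hj]
  -- define the Rokhlin projections
  refine ⟨fun g => ((P g : A)), ?_, ?_, ?_, ?_, ?_⟩
  · intro g
    constructor
    · have : star ((P g : A)) = ((star (P g) : Am M) : A) := rfl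
      rw [IsSelfAdjoint, this, hstar g]
    · rw [← MulMemClass.coe_mul, hmul g g, if_pos rfl]
  · intro g h hgh
    rw [← MulMemClass.coe_mul, hmul g h, if_neg hgh]
    rfl
  · intro g h
    have : α g ((P h : A)) = ((P (g * h) : A)) := by
      have := hequiv g h
      have h2 := congrArg (Subtype.val) this
      exact h2
    rw [this]
    simpa using hε
  · intro g a ha
    -- norm of the projection is at most 1
    have hP1 : ‖((P g : A))‖ ≤ 1 := by
      have hsa : star ((P g : A)) = ((P g : A)) := by
        have : star ((P g : A)) = ((star (P g) : Am M) : A) := rfl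
        rw [this, hstar g]
      have hid : ((P g : A)) * ((P g : A)) = ((P g : A)) := by
        rw [← MulMemClass.coe_mul, hmul g g, if_pos rfl]
      have h1 : ‖((P g : A))‖ * ‖((P g : A))‖ = ‖((P g : A))‖ := by
        rw [← CStarRing.norm_star_mul_self, hsa, hid]
      nlinarith [norm_nonneg ((P g : A))]
    -- the approximant commutes exactly
    have hqM : (q a).2 ∈ Am M := by
      have hle : (q a).1 ≤ M := Finset.le_sup (f := fun a => (q a).1) ha
      exact hmono hle (hq1 a ha)
    have hcomm : ((P g : A)) * (q a).2 = (q a).2 * ((P g : A)) := by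
      have := hcentral g ⟨(q a).2, hqM⟩
      have h2 := congrArg (Subtype.val) this
      exact h2
    have hnorm := hq2 a ha
    calc ‖((P g : A)) * a - a * ((P g : A))‖
        = ‖((P g : A)) * (a - (q a).2) - (a - (q a).2) * ((P g : A))‖ := by
          congr 1
          rw [mul_sub, sub_mul, hcomm]
          abel
      _ ≤ ‖((P g : A)) * (a - (q a).2)‖ + ‖(a - (q a).2) * ((P g : A))‖ := norm_sub_le _ _
      _ ≤ ‖((P g : A))‖ * ‖a - (q a).2‖ + ‖a - (q a).2‖ * ‖((P g : A))‖ := by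
          exact add_le_add (norm_mul_le _ _) (norm_mul_le _ _)
      _ ≤ ‖a - (q a).2‖ + ‖a - (q a).2‖ := by
          have h0 := norm_nonneg (a - (q a).2)
          have h1 := norm_nonneg ((P g : A))
          nlinarith
      _ < ε := by linarith
  · have : (∑ g : G, ((P g : A))) = ((∑ g : G, P g : Am M) : A) := by push_cast; ring
    rw [this, hsum]
    rfl

end
end
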